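/- arXiv:1010.1946 — 3 statements merged into one kernel-verified Lean document; each statement's English description precedes it below -/
import Mathlib

section
/- Let R ⊇ ℚ be a field and let Y, Z ∈ H⟦ℏ⟧[[Q]]. Assume: (i) for every i ∈ {1,…,n}, the Q^0-coefficient of Y(x=α_i,ℏ,Q) is a nonzero element of R_α and every Q^d-coefficient with d ≥ 1 lies in R_α(ℏ); (ii) Z is recursive; (iii) the pair (Y,Z) satisfies the MPC. Then the part of Z involving only nonnegative powers of ℏ vanishes if and only if Z = 0. -/
open Finset

noncomputable section

namespace Stmt1

variable (n : ℕ) (R : Type) [Field R] [Algebra ℚ R]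

/-- The multiplicative set of (images in `R[α_1,…,α_n]` of) nonzero elements of
`ℚ[α_1,…,α_n]`. -/
def qSet : Submonoid (MvPolynomial (Fin n) R) :=
  Submonoid.map (MvPolynomial.map (algebraMap ℚ R) : MvPolynomial (Fin n) ℚ →+* _).toMonoidHom
    (nonZeroDivisors (MvPolynomial (Fin n) ℚ))

/-- `R_α`: the localization of `R[α_1,…,α_n]` at the nonzero elements of `ℚ[α_1,…,α_n]`. -/
abbrev Ra := Localization (qSet n R)

/-- `H = R[α_1,…,α_n, x]/((x-α_1)⋯(x-α_n))`, realized as a quotient of the polynomial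
ring on the variables `α_i` (`some i`) and `x` (`none`). -/
abbrev Hring := MvPolynomial (Option (Fin n)) R ⧸
  Ideal.span ({∏ i : Fin n,
      (MvPolynomial.X (none : Option (Fin n)) - MvPolynomial.X (some i))} :
    Set (MvPolynomial (Option (Fin n)) R))

/-- The canonical map `R[α] → R_α`. -/
def toRa : MvPolynomial (Fin n) R →+* Ra n R := algebraMap _ _

/-- The indeterminates `α_i` as elements of `R_α`. -/
def aR (i : Fin n) : Ra n R := toRa n R (MvPolynomial.X i)

/-- The canonical map `ℚ → R_α`. -/
def qmap : ℚ →+* Ra n R :=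
  (toRa n R).comp ((MvPolynomial.C).comp (algebraMap ℚ R))

/-- Evaluation `x = α_i : H → R_α`. -/
def evH (i : Fin n) : Hring n R →+* Ra n R :=
  Ideal.Quotient.lift _
    (MvPolynomial.eval₂Hom ((toRa n R).comp MvPolynomial.C)
      (fun v => match v with
        | none => aR n R i
        | some k => aR n R k)) (by
    intro f hf
    rw [Ideal.mem_span_singleton] at hf
    obtain ⟨g, rfl⟩ := hf
    rw [map_mul]
    have h0 : (MvPolynomial.eval₂Hom ((toRa n R).comp MvPolynomial.C)
        (fun v : Option (Fin n) => match v with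
          | none => aR n R i
          | some k => aR n R k))
        (∏ j : Fin n,
          (MvPolynomial.X (none : Option (Fin n)) - MvPolynomial.X (some j))) = 0 := by
      rw [map_prod]
      refine Finset.prod_eq_zero (Finset.mem_univ i) ?_
      simp
    rw [h0, zero_mul])

/-- Coefficientwise application of a ring homomorphism to a Laurent series. -/
def mapLS {A B : Type*} [CommRing A] [CommRing B] (f : A →+* B)
    (x : LaurentSeries A) : LaurentSeries B where
  coeff := fun g => f (x.coeff g)
  isPWO_support' := x.isPWO_support'.mono (by
    intro g hg
    simp only [Function.mem_support] at hg ⊢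
    exact fun h0 => hg (by rw [h0, map_zero]))

/-- Evaluation at `x = α_i` of an element of `H⟦ℏ⟧[[Q]]` (given by its `Q`-coefficients). -/
def ZE (Z : ℕ → LaurentSeries (Hring n R)) (i : Fin n) : ℕ → LaurentSeries (Ra n R) :=
  fun d => mapLS (evH n R i) (Z d)

/-- The Laurent-series expansion (at `ℏ⁻¹ = 0`) of a polynomial in `ℏ`; the variable of
`LaurentSeries` is `X = ℏ⁻¹`. -/
def hEv : Polynomial (Ra n R) →+* LaurentSeries (Ra n R) :=
  Polynomial.eval₂RingHom (HahnSeries.C : Ra n R →+* LaurentSeries (Ra n R))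
    (HahnSeries.single (-1 : ℤ) (1 : Ra n R))

/-- `f` is the Laurent expansion at `ℏ⁻¹ = 0` of the rational function `p/q` of `ℏ`. -/
def IsExp (f : LaurentSeries (Ra n R)) (p q : Polynomial (Ra n R)) : Prop :=
  hEv n R q * f = hEv n R p

/-- `f` lies in (the image of) `R_α(ℏ)`. -/
def MemRat (f : LaurentSeries (Ra n R)) : Prop :=
  ∃ p q : Polynomial (Ra n R), q ≠ 0 ∧ IsExp n R f p q

/-- `f ∈ R_α(ℏ)` is regular at `ℏ = c`. -/
def RegAt (f : LaurentSeries (Ra n R)) (c : Ra n R) : Prop :=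
  ∃ p q : Polynomial (Ra n R), IsUnit (Polynomial.eval c q) ∧ IsExp n R f p q

open Classical in
/-- The value at `ℏ = c` of (the rational function represented by) `f`. -/
def evalAt (f : LaurentSeries (Ra n R)) (c : Ra n R) : Ra n R :=
  if h : RegAt n R f c then
    Polynomial.eval c h.choose * Ring.inverse (Polynomial.eval c h.choose_spec.choose)
  else 0

/-- `f` is a Laurent polynomial in `ℏ`, i.e. lies in `R_α[ℏ, ℏ⁻¹]`. -/
def IsLaurentPoly (f : LaurentSeries (Ra n R)) : Prop :=
  (Function.support f.coeff).Finite

/-- The expansion in `⟦ℏ⟧` of `1/(ℏ - c)`. -/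
def oneOverHbarSub (c : Ra n R) : LaurentSeries (Ra n R) :=
  (HahnSeries.ofPowerSeries ℤ (Ra n R))
    (PowerSeries.mk fun k => if k = 0 then 0 else c ^ (k - 1))

/-- `C`-recursivity (Definition 4.1), expressed in terms of the evaluations
`W i = Z(x = α_i, ℏ, Q)`. -/
def CRec (Cc : ℕ → Fin n → Fin n → Ra n R) (W : Fin n → ℕ → LaurentSeries (Ra n R)) : Prop :=
  ∀ dstar : ℕ,
    (∀ d, 1 ≤ d → d ≤ dstar → ∀ i, MemRat n R (W i (dstar - d))) →
    (∀ d, 1 ≤ d → d < dstar → ∀ i j : Fin n, i ≠ j →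
      RegAt n R (W i d) ((aR n R i - aR n R j) * Ring.inverse ((d : ℕ) : Ra n R))) →
    ∀ i : Fin n,
      IsLaurentPoly n R
        (W i dstar - ∑ d ∈ Icc 1 dstar, ∑ j ∈ univ.erase i,
          HahnSeries.C (Cc d i j) *
            oneOverHbarSub n R ((aR n R j - aR n R i) * Ring.inverse ((d : ℕ) : Ra n R)) *
            HahnSeries.C (evalAt n R (W j (dstar - d))
              ((aR n R j - aR n R i) * Ring.inverse ((d : ℕ) : Ra n R))))

/-- Recursivity: `C`-recursivity for some collection `C` of elements of `R_α`. -/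
def Recursive (W : Fin n → ℕ → LaurentSeries (Ra n R)) : Prop :=
  ∃ Cc : ℕ → Fin n → Fin n → Ra n R, CRec n R Cc W

/-- Negation substitution `ℏ ↦ -ℏ` on Laurent series in `ℏ⁻¹`. -/
def negSubst (f : LaurentSeries (Ra n R)) : LaurentSeries (Ra n R) where
  coeff := fun e => ((Int.negOnePow e : ℤˣ) : ℤ) • f.coeff e
  isPWO_support' := f.isPWO_support'.mono (by
    intro e he
    simp only [Function.mem_support] at he ⊢
    exact fun h0 => he (by rw [h0]; simp))

/-- The coefficient of `z^A Q^b` in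
`Φ_{Y,Z}(ℏ,z,Q) = Σ_i (e^{α_i z}/∏_{k≠i}(α_i-α_k)) Y(α_i,ℏ,Q e^{ℏz}) Z(α_i,-ℏ,Q)`,
in terms of the evaluations `WY i = Y(x=α_i,·,·)`, `WZ i = Z(x=α_i,·,·)`. -/
def PhiCoef (WY WZ : Fin n → ℕ → LaurentSeries (Ra n R)) (A b : ℕ) : LaurentSeries (Ra n R) :=
  ∑ i : Fin n,
    HahnSeries.C (Ring.inverse (∏ k ∈ univ.erase i, (aR n R i - aR n R k))) *
      ∑ dd ∈ Finset.HasAntidiagonal.antidiagonal b, ∑ kk ∈ Finset.HasAntidiagonal.antidiagonal A,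
        HahnSeries.C (qmap n R ((1 : ℚ) / kk.1.factorial / kk.2.factorial) *
            aR n R i ^ kk.1 * ((dd.1 : ℕ) : Ra n R) ^ kk.2) *
          (HahnSeries.single (-1 : ℤ) (1 : Ra n R)) ^ kk.2 *
          WY i dd.1 * negSubst n R (WZ i dd.2)

/-- The mutual polynomiality condition: `Φ_{Y,Z} ∈ R_α[ℏ][[z,Q]]`. -/
def MPC (WY WZ : Fin n → ℕ → LaurentSeries (Ra n R)) : Prop :=
  ∀ A b : ℕ, ∃ p : Polynomial (Ra n R), PhiCoef n R WY WZ A b = hEv n R p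

end Stmt1

/-!
Induct on the `Q`-degree `b`. Once the coefficients of `Z` below `Q^b` vanish, the only term
of `Φ_{Y,Z}` in `Q^b` comes from `Y`'s `Q⁰`-coefficient `r_i`, so the `z^A Q^b`-coefficient of
the MPC says that `Σ_i α_i^A r_i Z_b(α_i,-ℏ) / ∏_{k≠i}(α_i-α_k)` is a polynomial in `ℏ` for every
`A`. The Vandermonde matrix of the distinct `α_i` is invertible, so each `Z_b(α_i,ℏ)` is a
polynomial in `ℏ`, hence zero once its nonnegative-power part is. Finally the evaluations
`x = α_i` jointly separate the points of `H`, because an element of `R[α][x]` vanishing at every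
`α_i` is divisible by `∏_i (x - α_i)`.
-/

namespace Stmt1

open Polynomial

section

variable {n : ℕ} {R : Type} [Field R] [Algebra ℚ R]

lemma qSet_le_nonZeroDivisors : qSet n R ≤ nonZeroDivisors (MvPolynomial (Fin n) R) := by
  rintro _ ⟨p, hp, rfl⟩
  refine mem_nonZeroDivisors_of_ne_zero fun h => nonZeroDivisors.ne_zero hp ?_
  exact MvPolynomial.map_injective _ (algebraMap ℚ R).injective (by simpa using h)

instance : IsDomain (Ra n R) :=
  IsLocalization.isDomain_of_le_nonZeroDivisors _ (qSet_le_nonZeroDivisors (n := n) (R := R))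

lemma toRa_injective : Function.Injective (toRa n R) :=
  IsLocalization.injective _ qSet_le_nonZeroDivisors

lemma aR_injective : Function.Injective (aR n R) :=
  toRa_injective.comp MvPolynomial.X_injective

lemma isUnit_aR_sub {i j : Fin n} (hij : i ≠ j) : IsUnit (aR n R i - aR n R j) := by
  have hp : (MvPolynomial.X i - MvPolynomial.X j : MvPolynomial (Fin n) ℚ) ≠ 0 :=
    sub_ne_zero.mpr (MvPolynomial.X_injective.ne hij)
  simpa [aR, toRa] using IsLocalization.map_units (Ra n R)
    (⟨_, ⟨_, mem_nonZeroDivisors_of_ne_zero hp, rfl⟩⟩ : qSet n R)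

lemma isUnit_inverse_prod_aR_sub (i : Fin n) :
    IsUnit (Ring.inverse (∏ k ∈ univ.erase i, (aR n R i - aR n R k))) :=
  isUnit_ringInverse.mpr <| IsUnit.prod_iff.mpr fun _ hk =>
    isUnit_aR_sub (Finset.ne_of_mem_erase hk).symm

lemma prod_X_sub_C_dvd_of_forall_eval_eq_zero {ι A : Type*} [Fintype ι] [CommRing A] [IsDomain A]
    {s : ι → A} (hs : Function.Injective s) {F : A[X]} (hF : ∀ i, F.eval (s i) = 0) :
    ∏ i, (X - C (s i)) ∣ F := by
  rcases eq_or_ne F 0 with rfl | hF0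
  · exact dvd_zero _
  have hmap : univ.val.map (fun i => X - C (s i)) = (univ.val.map s).map (fun a => X - C a) := by
    rw [Multiset.map_map]; rfl
  rw [Finset.prod_eq_multiset_prod, hmap, Multiset.prod_X_sub_C_dvd_iff_le_roots hF0,
    Multiset.le_iff_subset (univ.nodup.map hs)]
  intro a ha
  obtain ⟨i, -, rfl⟩ := Multiset.mem_map.mp ha
  exact (mem_roots hF0).mpr (hF i)

lemma evH_mk (i : Fin n) (f : MvPolynomial (Option (Fin n)) R) :
    evH n R i (Ideal.Quotient.mk _ f) =
      toRa n R ((MvPolynomial.optionEquivLeft R (Fin n) f).eval (MvPolynomial.X i)) := by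
  rw [evH, Ideal.Quotient.lift_mk]
  induction f using MvPolynomial.induction_on with
  | C c => simp [MvPolynomial.optionEquivLeft_C, toRa]
  | add p q hp hq => simp only [map_add, hp, hq, eval_add]
  | mul_X p v hp =>
    simp only [map_mul, eval_mul, hp]
    cases v <;> simp [MvPolynomial.optionEquivLeft_X_none, MvPolynomial.optionEquivLeft_X_some, aR]

lemma eq_zero_of_forall_evH_eq_zero {h : Hring n R} (h0 : ∀ i, evH n R i h = 0) : h = 0 := by
  obtain ⟨f, rfl⟩ := Ideal.Quotient.mk_surjective h
  rw [Ideal.Quotient.eq_zero_iff_mem, Ideal.mem_span_singleton,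
    ← map_dvd_iff (MvPolynomial.optionEquivLeft R (Fin n)), map_prod]
  simp only [map_sub, MvPolynomial.optionEquivLeft_X_none, MvPolynomial.optionEquivLeft_X_some]
  refine prod_X_sub_C_dvd_of_forall_eval_eq_zero MvPolynomial.X_injective fun i => ?_
  exact toRa_injective (by rw [← evH_mk, h0, map_zero])

lemma coeff_hEv_of_pos (p : (Ra n R)[X]) {e : ℤ} (he : 0 < e) : (hEv n R p).coeff e = 0 := by
  induction p using Polynomial.induction_on' with
  | add p q hp hq => rw [map_add, HahnSeries.coeff_add, hp, hq, add_zero]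
  | monomial k a =>
    have hmon : hEv n R (monomial k a) = HahnSeries.single (-(k : ℤ)) a := by
      rw [hEv, coe_eval₂RingHom, eval₂_monomial, HahnSeries.single_pow, HahnSeries.C_apply,
        HahnSeries.single_mul_single]
      norm_num
    rw [hmon, HahnSeries.coeff_single_of_ne (by omega)]

lemma coeff_negSubst_eq_zero_iff {f : LaurentSeries (Ra n R)} {e : ℤ} :
    (negSubst n R f).coeff e = 0 ↔ f.coeff e = 0 :=
  show ((Int.negOnePow e : ℤˣ) : ℤ) • f.coeff e = 0 ↔ _ by
    rw [zsmul_eq_mul]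
    exact ((Int.negOnePow e).isUnit.map (Int.castRingHom (Ra n R))).mul_right_eq_zero

@[simp]
lemma negSubst_zero : negSubst n R 0 = 0 := by
  ext e
  simp [negSubst]

lemma ZE_eq_zero_of_eq_zero {Z : ℕ → LaurentSeries (Hring n R)} {d : ℕ} (hd : Z d = 0)
    (i : Fin n) : ZE n R Z i d = 0 := by
  ext e
  simp [ZE, mapLS, hd]

lemma phiCoef_eq_of_forall_lt_eq_zero {WY WZ : Fin n → ℕ → LaurentSeries (Ra n R)}
    {r : Fin n → Ra n R} (hY0 : ∀ i, WY i 0 = HahnSeries.C (r i)) {b : ℕ}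
    (hZ : ∀ i, ∀ d < b, WZ i d = 0) (A : ℕ) :
    PhiCoef n R WY WZ A b = ∑ i, HahnSeries.C (qmap n R (A.factorial : ℚ)⁻¹ *
      (Ring.inverse (∏ k ∈ univ.erase i, (aR n R i - aR n R k)) * r i * aR n R i ^ A)) *
        negSubst n R (WZ i b) := by
  refine Finset.sum_congr rfl fun i _ => ?_
  have hlower : ∀ dd ∈ antidiagonal b, dd ≠ (0, b) → ∑ kk ∈ antidiagonal A,
      HahnSeries.C (qmap n R ((1 : ℚ) / kk.1.factorial / kk.2.factorial) *
        aR n R i ^ kk.1 * ((dd.1 : ℕ) : Ra n R) ^ kk.2) *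
      (HahnSeries.single (-1 : ℤ) (1 : Ra n R)) ^ kk.2 * WY i dd.1 * negSubst n R (WZ i dd.2) = 0 := by
    intro dd hdd hne
    have hlt : dd.2 < b := by
      obtain ⟨d₁, d₂⟩ := dd
      simp only [HasAntidiagonal.mem_antidiagonal, ne_eq, Prod.mk.injEq] at hdd hne
      omega
    simp [hZ i _ hlt]
  have hhigher : ∀ kk ∈ antidiagonal A, kk ≠ (A, 0) →
      HahnSeries.C (qmap n R ((1 : ℚ) / kk.1.factorial / kk.2.factorial) *
        aR n R i ^ kk.1 * (((0 : ℕ) : ℕ) : Ra n R) ^ kk.2) *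
      (HahnSeries.single (-1 : ℤ) (1 : Ra n R)) ^ kk.2 * WY i 0 * negSubst n R (WZ i b) = 0 := by
    intro kk hkk hne
    have hk2 : kk.2 ≠ 0 := by
      obtain ⟨k₁, k₂⟩ := kk
      simp only [HasAntidiagonal.mem_antidiagonal, ne_eq, Prod.mk.injEq] at hkk hne ⊢
      omega
    rw [Nat.cast_zero, zero_pow hk2, mul_zero, map_zero, zero_mul, zero_mul, zero_mul]
  rw [sum_eq_single (0, b) hlower fun h => absurd (HasAntidiagonal.mem_antidiagonal.mpr (zero_add b)) h,
    sum_eq_single (A, 0) hhigher fun h => absurd (HasAntidiagonal.mem_antidiagonal.mpr (add_zero A)) h]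
  simp only [hY0 i, pow_zero, mul_one, Nat.factorial_zero, Nat.cast_one, div_one, one_div,
    ← mul_assoc, ← map_mul]
  congr 2
  ring

lemma coeff_eq_zero_of_MPC {WY WZ : Fin n → ℕ → LaurentSeries (Ra n R)} {r : Fin n → Ra n R}
    (hr : ∀ i, r i ≠ 0) (hY0 : ∀ i, WY i 0 = HahnSeries.C (r i)) (hMPC : MPC n R WY WZ) {b : ℕ}
    (hZ : ∀ i, ∀ d < b, WZ i d = 0) {e : ℤ} (he : 0 < e) (i : Fin n) : (WZ i b).coeff e = 0 := by
  set c : Fin n → Ra n R := fun j => Ring.inverse (∏ k ∈ univ.erase j, (aR n R j - aR n R k)) *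
    r j * (negSubst n R (WZ j b)).coeff e with hc_def
  have hc : c = 0 := by
    refine Matrix.eq_zero_of_forall_pow_sum_mul_pow_eq_zero aR_injective fun A => ?_
    obtain ⟨p, hp⟩ := hMPC A b
    have hcoeff := congrArg (HahnSeries.coeff · e) hp
    simp only [phiCoef_eq_of_forall_lt_eq_zero hY0 hZ, coeff_hEv_of_pos p he,
      HahnSeries.coeff_sum, HahnSeries.C_mul_eq_smul, HahnSeries.coeff_smul, smul_eq_mul] at hcoeff
    have hunit : IsUnit (qmap n R ((A : ℕ).factorial : ℚ)⁻¹) :=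
      (Ne.isUnit (by positivity)).map (qmap n R)
    refine hunit.mul_right_eq_zero.mp ?_
    rw [mul_sum, ← hcoeff]
    refine sum_congr rfl fun j _ => ?_
    simp only [hc_def]
    ring
  simpa [c, (isUnit_inverse_prod_aR_sub i).ne_zero, hr i, coeff_negSubst_eq_zero_iff]
    using congrFun hc i

end

theorem stmt1_general (n : ℕ) (R : Type) [Field R] [Algebra ℚ R]
    (Y Z : ℕ → LaurentSeries (Hring n R))
    (hY0 : ∀ i : Fin n, ∃ r : Ra n R, r ≠ 0 ∧ ZE n R Y i 0 = HahnSeries.C r)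
    (hMPC : MPC n R (ZE n R Y) (ZE n R Z)) :
    (∀ d : ℕ, ∀ e : ℤ, e ≤ 0 → (Z d).coeff e = 0) ↔ ∀ d, Z d = 0 := by
  choose r hr hY0 using hY0
  refine ⟨fun h0 d => ?_, fun h d e _ => by rw [h d, HahnSeries.coeff_zero]⟩
  induction d using Nat.strong_induction_on with
  | _ b ih =>
    ext e
    rcases le_or_gt e 0 with he | he
    · exact h0 b e he
    refine eq_zero_of_forall_evH_eq_zero fun i => ?_
    exact coeff_eq_zero_of_MPC hr hY0 hMPC (fun j d hd => ZE_eq_zero_of_eq_zero (ih d hd) j) he i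

/-- Proposition 4.3: if the `Q⁰`-coefficient of `Y(x=α_i,ℏ,Q)` is a nonzero
element of `R_α` and all higher `Q`-coefficients lie in `R_α(ℏ)` for every `i`, `Z` is
recursive, and `(Y,Z)` satisfies the MPC, then the part of `Z` involving only nonnegative
powers of `ℏ` vanishes if and only if `Z = 0`. -/
theorem stmt1 (n : ℕ) (hn : 2 ≤ n) (R : Type) [Field R] [Algebra ℚ R]
    (Y Z : ℕ → LaurentSeries (Hring n R))
    (hY0 : ∀ i : Fin n, ∃ r : Ra n R, r ≠ 0 ∧ ZE n R Y i 0 = HahnSeries.C r)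
    (hY : ∀ i : Fin n, ∀ d, 1 ≤ d → MemRat n R (ZE n R Y i d))
    (hZ : Recursive n R (ZE n R Z))
    (hMPC : MPC n R (ZE n R Y) (ZE n R Z)) :
    (∀ d : ℕ, ∀ e : ℤ, e ≤ 0 → (Z d).coeff e = 0) ↔ ∀ d, Z d = 0 :=
  stmt1_general n R Y Z hY0 hMPC

end Stmt1
end
end

section
/- For every i ∈ {1,…,n} and every d* ∈ ℤ^+, the coefficient of q^{d*} in 𝒴_{−l}(α_i,ℏ,q), minus Σ_{d=1}^{d*} Σ_{j≠i} (𝔠^j_i(d)/(ℏ − (α_j−α_i)/d)) times the coefficient of q^{d*−d} in 𝒴_{−l}(α_j,ℏ',q) evaluated at ℏ' = (α_j−α_i)/d, is a Laurent polynomial in ℏ, i.e. lies in ℚ_α[ℏ, ℏ^{−1}]. (In other words, the hypergeometric series 𝒴_{−l} is 𝔠-recursive.) -/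
/-!
Write the `q^{d*}`-coefficient of `𝒴_{-l}(α_i, ℏ, q)` as `N(ℏ)/D(ℏ)` with
`D(ℏ) = ∏_{r=1}^{d*} ∏_k (α_i - α_k + rℏ)`. Up to a constant and `ℏ^{d*}`, `D` is the product
of the linear factors `ℏ - (α_j - α_i)/d`, `1 ≤ d ≤ d*`, `j ≠ i`, which are pairwise distinct
because the `α_k` are algebraically independent. So `N/D` minus its principal parts at these
simple poles is a polynomial divided by `ℏ^{d*}`, and it remains to identify the residues.
At `ℏ = (α_j - α_i)/d` we have `α_i + dℏ = α_j`, so the factors with `r > d` of numerator and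
denominator become those of the `q^{d*-d}`-coefficient of `𝒴_{-l}(α_j, ℏ, q)`, while the factors
with `r ≤ d` make up `𝔠^j_i(d)`.
-/

open Finset

noncomputable section

namespace Stmt4

/-- `ℚ_α = ℚ(α_1,…,α_n)`, the field of rational functions in the indeterminates `α_i`. -/
abbrev Qa (n : ℕ) := FractionRing (MvPolynomial (Fin n) ℚ)

/-- The indeterminates `α_i` as elements of `ℚ_α`. -/
def al (n : ℕ) (i : Fin n) : Qa n := algebraMap (MvPolynomial (Fin n) ℚ) (Qa n) (MvPolynomial.X i)

/-- The `q^d`-coefficient of `𝒴_{-l}(x, ℏ, q)`, as a rational function of `ℏ`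
(the variable of `RatFunc`) with coefficients in `ℚ_α`. -/
def Ynl (n l : ℕ) (a : Fin l → ℕ) (x : Qa n) (d : ℕ) : RatFunc (Qa n) :=
  (∏ k, ∏ r ∈ range (a k * d),
      (RatFunc.C ((a k : Qa n) * x) + (r : RatFunc (Qa n)) * RatFunc.X)) /
    ∏ r ∈ range d, ∏ k,
      (RatFunc.C (x - al n k) + ((r : RatFunc (Qa n)) + 1) * RatFunc.X)

/-- The structure constants `𝔠^j_i(d) ∈ ℚ_α`. -/
def frakC (n l : ℕ) (a : Fin l → ℕ) (i j : Fin n) (d : ℕ) : Qa n :=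
  (∏ k, ∏ r ∈ range (a k * d),
      ((a k : Qa n) * al n i + (r : Qa n) * ((al n j - al n i) / (d : Qa n)))) /
    ((d : Qa n) * ∏ r ∈ Icc 1 d, ∏ k ∈ univ.filter (fun k => ¬(r = d ∧ k = j)),
      (al n i - al n k + (r : Qa n) * ((al n j - al n i) / (d : Qa n))))

end Stmt4

section PrincipalParts

open Polynomial

theorem RatFunc.eval_algebraMap_div {K : Type*} [Field K] {N D : K[X]} {c : K}
    (hD : D.eval c ≠ 0) :
    RatFunc.eval (RingHom.id K) c (algebraMap K[X] (RatFunc K) N / algebraMap K[X] (RatFunc K) D)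
      = N.eval c / D.eval c := by
  have hD0 : D ≠ 0 := by rintro rfl; simp at hD
  have hdenom : (algebraMap K[X] (RatFunc K) N / algebraMap K[X] (RatFunc K) D).denom.eval c ≠ 0 :=
    fun h0 => hD (eval_eq_zero_of_dvd_of_eval_eq_zero (RatFunc.denom_div_dvd N D) h0)
  have h := RatFunc.eval_mul (f := RingHom.id K) (a := c) hdenom
    (y := algebraMap K[X] (RatFunc K) D) (by simp [RatFunc.denom_algebraMap])
  rw [div_mul_cancel₀ _ (RatFunc.algebraMap_ne_zero hD0)] at h
  rw [eq_div_iff hD]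
  simpa using h.symm

-- `hr` says that `r s` is the residue of `N / D` at its simple pole `c s`.
theorem exists_polynomial_eq_sub_sum_div_X_sub_C_mul {K ι : Type*} [Field K] [DecidableEq ι]
    {S : Finset ι} {c : ι → K} (hc : Set.InjOn c S) {g N D : K[X]} (hg : g ≠ 0)
    (hD : D = g * ∏ s ∈ S, (X - C (c s))) (Ds : ι → K[X])
    (hDs : ∀ s ∈ S, D = (X - C (c s)) * Ds s) (r : ι → K)
    (hr : ∀ s ∈ S, N.eval (c s) = r s * (Ds s).eval (c s)) :
    ∃ P : K[X], (algebraMap K[X] (RatFunc K) N / algebraMap K[X] (RatFunc K) D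
        - ∑ s ∈ S, RatFunc.C (r s) / (RatFunc.X - RatFunc.C (c s)))
        * algebraMap K[X] (RatFunc K) g = algebraMap K[X] (RatFunc K) P := by
  have hDs_eq : ∀ s ∈ S, Ds s = g * ∏ t ∈ S.erase s, (X - C (c t)) := by
    intro s hs
    apply mul_left_cancel₀ (X_sub_C_ne_zero (c s))
    rw [← hDs s hs, hD, ← mul_prod_erase S _ hs]
    ring
  set Q := N - ∑ s ∈ S, C (r s) * Ds s
  have hroot : ∀ s ∈ S, X - C (c s) ∣ Q := by
    intro s hs
    rw [dvd_iff_isRoot, IsRoot, eval_sub, eval_finsetSum, sum_eq_single_of_mem s hs, eval_mul,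
      eval_C, hr s hs, sub_self]
    intro t ht hts
    rw [hDs_eq t ht, eval_mul, eval_mul, eval_prod,
      prod_eq_zero (mem_erase.2 ⟨fun h => hts h.symm, hs⟩) (by simp), mul_zero, mul_zero]
  obtain ⟨P, hP⟩ : ∏ s ∈ S, (X - C (c s)) ∣ Q :=
    prod_dvd_of_coprime (fun s hs t ht hst => isCoprime_X_sub_C_of_isUnit_sub
      (sub_ne_zero.2 (hc.ne hs ht hst)).isUnit) hroot
  refine ⟨P, ?_⟩
  have hE : algebraMap K[X] (RatFunc K) (∏ s ∈ S, (X - C (c s))) ≠ 0 :=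
    RatFunc.algebraMap_ne_zero (prod_ne_zero_iff.2 fun s _ => X_sub_C_ne_zero (c s))
  have hD0 : algebraMap K[X] (RatFunc K) D ≠ 0 :=
    RatFunc.algebraMap_ne_zero
      (hD ▸ mul_ne_zero hg (prod_ne_zero_iff.2 fun s _ => X_sub_C_ne_zero (c s)))
  apply mul_right_cancel₀ hE
  rw [mul_assoc, ← map_mul, ← hD, ← map_mul, mul_comm P, ← hP, sub_mul, sum_mul,
    div_mul_cancel₀ _ hD0, map_sub, map_sum]
  congr 1
  refine sum_congr rfl fun s hs => ?_
  have hXc : (RatFunc.X - RatFunc.C (c s) : RatFunc K) ≠ 0 := by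
    rw [← RatFunc.algebraMap_X, ← RatFunc.algebraMap_C, ← map_sub]
    exact RatFunc.algebraMap_ne_zero (X_sub_C_ne_zero (c s))
  rw [hDs s hs, map_mul, map_mul, map_sub, RatFunc.algebraMap_X, RatFunc.algebraMap_C,
    RatFunc.algebraMap_C]
  field_simp

end PrincipalParts

section Products

open Polynomial

variable {R S : Type*} [CommRing R] [CommRing S]

def numProd {l : ℕ} (a : Fin l → ℕ) (x h : R) (d : ℕ) : R :=
  ∏ k, ∏ r ∈ range (a k * d), ((a k : R) * x + r * h)

def denProd {n : ℕ} (α : Fin n → R) (x h : R) (d : ℕ) : R :=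
  ∏ r ∈ range d, ∏ k, (x - α k + (r + 1) * h)

def truncDenProd {n : ℕ} (α : Fin n → R) (x h : R) (d : ℕ) (j : Fin n) : R :=
  ∏ r ∈ Icc 1 d, ∏ k ∈ univ.filter (fun k => ¬(r = d ∧ k = j)), (x - α k + r * h)

theorem map_numProd (f : R →+* S) {l : ℕ} (a : Fin l → ℕ) (x h : R) (d : ℕ) :
    f (numProd a x h d) = numProd a (f x) (f h) d := by
  simp [numProd, map_prod]

theorem map_denProd (f : R →+* S) {n : ℕ} (α : Fin n → R) (x h : R) (d : ℕ) :
    f (denProd α x h d) = denProd (fun k => f (α k)) (f x) (f h) d := by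
  simp [denProd, map_prod]

theorem numProd_add {l : ℕ} (a : Fin l → ℕ) (x h : R) (d m : ℕ) :
    numProd a x h (d + m) = numProd a x h d * numProd a (x + d * h) h m := by
  simp only [numProd, ← prod_mul_distrib, mul_add, prod_range_add]
  refine prod_congr rfl fun k _ => congrArg _ (prod_congr rfl fun r _ => ?_)
  push_cast
  ring

theorem denProd_add {n : ℕ} (α : Fin n → R) (x h : R) (d m : ℕ) :
    denProd α x h (d + m) = denProd α x h d * denProd α (x + d * h) h m := by
  simp only [denProd, prod_range_add]
  refine congrArg _ (prod_congr rfl fun r _ => prod_congr rfl fun k _ => ?_)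
  push_cast
  ring

theorem prod_Icc_one_eq_prod_range {M : Type*} [CommMonoid M] (f : ℕ → M) (d : ℕ) :
    ∏ r ∈ Icc 1 d, f r = ∏ r ∈ range d, f (r + 1) := by
  rw [← Ico_add_one_right_eq_Icc, prod_Ico_eq_prod_range]
  simp [add_comm]

theorem denProd_eq_mul_truncDenProd {n : ℕ} (α : Fin n → R) (x h : R) {d : ℕ} (hd : d ≠ 0)
    (j : Fin n) : denProd α x h d = (x - α j + d * h) * truncDenProd α x h d j := by
  obtain ⟨d, rfl⟩ : ∃ d', d = d' + 1 := ⟨d - 1, by omega⟩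
  rw [denProd, truncDenProd, prod_range_succ, prod_Icc_succ_top (by omega),
    prod_Icc_one_eq_prod_range, ← mul_prod_erase univ _ (mem_univ j)]
  have hlast : univ.filter (fun k => ¬(d + 1 = d + 1 ∧ k = j)) = univ.erase j := by
    ext k; simp
  have hrows : ∏ r ∈ range d, ∏ k ∈ univ.filter (fun k => ¬(r + 1 = d + 1 ∧ k = j)),
      (x - α k + ((r + 1 : ℕ) : R) * h)
      = ∏ r ∈ range d, ∏ k, (x - α k + ((r + 1 : ℕ) : R) * h) :=
    prod_congr rfl fun r hr => by
      rw [filter_true_of_mem fun k _ => by simp at hr; omega]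
  rw [hlast, hrows]
  push_cast
  ring

theorem eval_numProd {l : ℕ} (a : Fin l → ℕ) (x : R[X]) (c : R) (d : ℕ) :
    (numProd a x X d).eval c = numProd a (x.eval c) c d := by
  simp [numProd, eval_prod]

theorem eval_denProd {n : ℕ} (α : Fin n → R) (x : R[X]) (c : R) (d : ℕ) :
    (denProd (fun k => C (α k)) x X d).eval c = denProd α (x.eval c) c d := by
  simp [denProd, eval_prod]

theorem eval_truncDenProd {n : ℕ} (α : Fin n → R) (x : R[X]) (c : R) (d : ℕ) (j : Fin n) :
    (truncDenProd (fun k => C (α k)) x X d j).eval c = truncDenProd α (x.eval c) c d j := by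
  simp [truncDenProd, eval_prod]

end Products

namespace Stmt4

theorem al_specialize {n a b : ℕ} {p q s t : Fin n}
    (h : (a : Qa n) * (al n p - al n q) = b * (al n s - al n t)) (v : Fin n → ℚ) :
    (a : ℚ) * (v p - v q) = b * (v s - v t) := by
  have hpoly : (a : MvPolynomial (Fin n) ℚ) * (.X p - .X q)
      - (b : MvPolynomial (Fin n) ℚ) * (.X s - .X t) = 0 :=
    IsFractionRing.injective _ (Qa n) (by
      simp only [map_sub, map_mul, map_natCast, map_zero]
      exact sub_eq_zero.2 h)
  simpa [sub_eq_zero] using congrArg (MvPolynomial.eval v) hpoly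

def pole (n : ℕ) (i j : Fin n) (d : ℕ) : Qa n := (al n j - al n i) / d

theorem natCast_mul_pole {n : ℕ} (i j : Fin n) {d : ℕ} (hd : d ≠ 0) :
    (d : Qa n) * pole n i j d = al n j - al n i :=
  mul_div_cancel₀ _ (Nat.cast_ne_zero.2 hd)

theorem pole_injOn (n : ℕ) (i : Fin n) :
    Set.InjOn (fun s : ℕ × Fin n => pole n i s.2 s.1) {s | s.1 ≠ 0 ∧ s.2 ≠ i} := by
  rintro ⟨d, j⟩ ⟨hd, hj⟩ ⟨d', j'⟩ ⟨hd', hj'⟩ h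
  have h' : (d' : Qa n) * (al n j - al n i) = d * (al n j' - al n i) := by
    rw [← natCast_mul_pole i j hd, ← natCast_mul_pole i j' hd',
      show pole n i j d = pole n i j' d' from h]
    ring
  have := al_specialize h' (Pi.single j 1)
  by_cases hjj : j = j'
  · subst hjj
    simp [hj] at this
    rw [this]
  · simp [hj, hjj] at this
    exact absurd this hd'

theorem truncDenProd_pole_ne_zero {n : ℕ} {i j : Fin n} (hji : j ≠ i) {d : ℕ} (hd : d ≠ 0) :
    truncDenProd (al n) (al n i) (pole n i j d) d j ≠ 0 := by
  refine prod_ne_zero_iff.2 fun r hr => prod_ne_zero_iff.2 fun k hk h0 => ?_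
  simp only [mem_Icc, mem_filter, mem_univ, true_and] at hr hk
  have h' : (d : Qa n) * (al n i - al n k) = r * (al n i - al n j) := by
    linear_combination (d : Qa n) * h0 - (r : Qa n) * natCast_mul_pole i j hd
  have := al_specialize h' (Pi.single k 1)
  by_cases hki : k = i
  · subst hki
    simp [hji] at this
    norm_cast at this
    omega
  by_cases hkj : k = j
  · subst hkj
    simp [hji] at this
    exact hk ⟨this.symm, rfl⟩
  · simp [hki, hkj] at this
    exact hd this

theorem denProd_pole_ne_zero {n : ℕ} {i j : Fin n} (hji : j ≠ i) {d : ℕ} (hd : d ≠ 0) (m : ℕ) :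
    denProd (al n) (al n j) (pole n i j d) m ≠ 0 := by
  refine prod_ne_zero_iff.2 fun r _ => prod_ne_zero_iff.2 fun k _ h0 => ?_
  have h' : (d : Qa n) * (al n j - al n k) = (r + 1 : ℕ) * (al n i - al n j) := by
    push_cast
    linear_combination (d : Qa n) * h0 - ((r : Qa n) + 1) * natCast_mul_pole i j hd
  have := al_specialize h' (Pi.single k 1)
  by_cases hki : k = i
  · subst hki
    simp [hji] at this
    linarith [Nat.cast_nonneg (α := ℚ) d, Nat.cast_nonneg (α := ℚ) r]
  by_cases hkj : k = j
  · subst hkj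
    simp [hji] at this
    linarith [Nat.cast_nonneg (α := ℚ) r]
  · simp [hki, hkj] at this
    exact hd this

section Polynomials

open Polynomial

variable {n : ℕ}

theorem al_add_natCast_mul_pole (i j : Fin n) {d : ℕ} (hd : d ≠ 0) :
    al n i + d * pole n i j d = al n j := by
  rw [natCast_mul_pole i j hd]
  ring

theorem Ynl_eq_div (l : ℕ) (a : Fin l → ℕ) (x : Qa n) (d : ℕ) :
    Ynl n l a x d = algebraMap (Qa n)[X] (RatFunc (Qa n)) (numProd a (C x) X d)
      / algebraMap (Qa n)[X] (RatFunc (Qa n)) (denProd (fun k => C (al n k)) (C x) X d) := by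
  rw [map_numProd, map_denProd]
  simp [Ynl, numProd, denProd]

theorem eval_Ynl (l : ℕ) (a : Fin l → ℕ) {x c : Qa n} {d : ℕ} (h : denProd (al n) x c d ≠ 0) :
    RatFunc.eval (RingHom.id _) c (Ynl n l a x d) = numProd a x c d / denProd (al n) x c d := by
  have hD : (denProd (fun k => C (al n k)) (C x) X d).eval c ≠ 0 := by
    rwa [eval_denProd, eval_C]
  rw [Ynl_eq_div, RatFunc.eval_algebraMap_div hD, eval_numProd, eval_denProd, eval_C]

theorem linFactor_eq_C_mul_X_sub_C_pole (i k : Fin n) {r : ℕ} (hr : r ≠ 0) :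
    C (al n i) - C (al n k) + (r : (Qa n)[X]) * X = C (r : Qa n) * (X - C (pole n i k r)) := by
  rw [mul_sub, ← C_mul, natCast_mul_pole i k hr, map_natCast, map_sub]
  ring

theorem denProd_X_eq_C_mul_X_pow_mul_prod (i : Fin n) (dstar : ℕ) :
    ∃ u ≠ 0, denProd (fun k => C (al n k)) (C (al n i)) X dstar
      = C u * X ^ dstar * ∏ s ∈ Icc 1 dstar ×ˢ univ.erase i, (X - C (pole n i s.2 s.1)) := by
  refine ⟨∏ r ∈ range dstar, ∏ _k : Fin n, ((r + 1 : ℕ) : Qa n), ?_, ?_⟩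
  · exact prod_ne_zero_iff.2 fun r _ =>
      prod_ne_zero_iff.2 fun _ _ => Nat.cast_ne_zero.2 r.succ_ne_zero
  have hrow : ∀ r : ℕ, ∏ k, (X - C (pole n i k (r + 1)))
      = X * ∏ k ∈ univ.erase i, (X - C (pole n i k (r + 1))) := by
    intro r
    rw [← mul_prod_erase univ _ (mem_univ i)]
    simp [pole]
  simp_rw [denProd, ← Nat.cast_add_one, linFactor_eq_C_mul_X_sub_C_pole i _ (Nat.succ_ne_zero _),
    prod_mul_distrib, hrow, prod_mul_distrib, map_prod, prod_const, card_range, prod_product,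
    prod_Icc_one_eq_prod_range]
  ring

def poleCofactor (n : ℕ) (i j : Fin n) (d dstar : ℕ) : (Qa n)[X] :=
  C (d : Qa n) * (truncDenProd (fun k => C (al n k)) (C (al n i)) X d j
    * denProd (fun k => C (al n k)) (C (al n i) + (d : (Qa n)[X]) * X) X (dstar - d))

theorem denProd_X_eq_X_sub_C_pole_mul (i j : Fin n) {d dstar : ℕ} (hd : d ≠ 0)
    (hdd : d ≤ dstar) :
    denProd (fun k => C (al n k)) (C (al n i)) X dstar
      = (X - C (pole n i j d)) * poleCofactor n i j d dstar := by
  obtain ⟨m, rfl⟩ := Nat.exists_eq_add_of_le hdd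
  rw [poleCofactor, denProd_add, denProd_eq_mul_truncDenProd _ _ _ hd j,
    linFactor_eq_C_mul_X_sub_C_pole i j hd, Nat.add_sub_cancel_left]
  ring

theorem eval_poleCofactor (i j : Fin n) {d : ℕ} (hd : d ≠ 0) (dstar : ℕ) :
    (poleCofactor n i j d dstar).eval (pole n i j d)
      = d * (truncDenProd (al n) (al n i) (pole n i j d) d j
        * denProd (al n) (al n j) (pole n i j d) (dstar - d)) := by
  simp [poleCofactor, eval_truncDenProd, eval_denProd, al_add_natCast_mul_pole i j hd]

theorem eval_numProd_pole (l : ℕ) (a : Fin l → ℕ) {i j : Fin n} (hji : j ≠ i) {d dstar : ℕ}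
    (hd : d ≠ 0) (hdd : d ≤ dstar) :
    (numProd a (C (al n i)) X dstar).eval (pole n i j d)
      = frakC n l a i j d
          * RatFunc.eval (RingHom.id _) (pole n i j d) (Ynl n l a (al n j) (dstar - d))
          * (poleCofactor n i j d dstar).eval (pole n i j d) := by
  obtain ⟨m, rfl⟩ := Nat.exists_eq_add_of_le hdd
  have hfrakC : frakC n l a i j d = numProd a (al n i) (pole n i j d) d
      / (d * truncDenProd (al n) (al n i) (pole n i j d) d j) := rfl
  have htrunc := truncDenProd_pole_ne_zero hji hd
  have hden := denProd_pole_ne_zero hji hd m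
  rw [eval_numProd, eval_C, numProd_add, al_add_natCast_mul_pole i j hd,
    eval_poleCofactor i j hd, Nat.add_sub_cancel_left, eval_Ynl l a hden, hfrakC]
  field_simp

end Polynomials

theorem stmt4_general (n l : ℕ) (a : Fin l → ℕ)
    (i : Fin n) (dstar : ℕ) :
    ∃ (p : Polynomial (Qa n)) (N : ℕ),
      (Ynl n l a (al n i) dstar
          - ∑ d ∈ Icc 1 dstar, ∑ j ∈ univ.erase i,
              RatFunc.C (frakC n l a i j d) /
                  (RatFunc.X - RatFunc.C ((al n j - al n i) / (d : Qa n))) *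
                RatFunc.C (RatFunc.eval (RingHom.id (Qa n))
                  ((al n j - al n i) / (d : Qa n)) (Ynl n l a (al n j) (dstar - d))))
        * RatFunc.X ^ N
      = algebraMap (Polynomial (Qa n)) (RatFunc (Qa n)) p := by
  classical
  have hS : ∀ s ∈ Icc 1 dstar ×ˢ univ.erase i, s.1 ≠ 0 ∧ s.1 ≤ dstar ∧ s.2 ≠ i := by
    simp only [mem_product, mem_Icc, mem_erase]
    omega
  obtain ⟨u, hu, hD⟩ := denProd_X_eq_C_mul_X_pow_mul_prod i dstar
  obtain ⟨P, hP⟩ := exists_polynomial_eq_sub_sum_div_X_sub_C_mul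
    ((pole_injOn n i).mono fun s hs =>
      show s.1 ≠ 0 ∧ s.2 ≠ i from ⟨(hS s hs).1, (hS s hs).2.2⟩)
    (mul_ne_zero (Polynomial.C_ne_zero.2 hu) (pow_ne_zero _ Polynomial.X_ne_zero)) hD
    (fun s => poleCofactor n i s.2 s.1 dstar)
    (fun s hs => denProd_X_eq_X_sub_C_pole_mul i s.2 (hS s hs).1 (hS s hs).2.1) _
    (fun s hs => eval_numProd_pole l a (hS s hs).2.2 (hS s hs).1 (hS s hs).2.1)
  refine ⟨Polynomial.C u⁻¹ * P, dstar, ?_⟩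
  rw [map_mul, ← hP, ← Ynl_eq_div, sum_product]
  simp only [div_mul_eq_mul_div, ← map_mul, RatFunc.algebraMap_C, pole]
  rw [mul_left_comm, map_mul, map_pow, RatFunc.algebraMap_C, RatFunc.algebraMap_X,
    ← mul_assoc (RatFunc.C u⁻¹), ← map_mul, inv_mul_cancel₀ hu, map_one, one_mul]

/-- the hypergeometric series `𝒴_{-l}` is `𝔠`-recursive; i.e. for every
`i` and `d* ≥ 1`, the `q^{d*}`-coefficient of `𝒴_{-l}(α_i, ℏ, q)` minus
`Σ_{d=1}^{d*} Σ_{j≠i} 𝔠^j_i(d)/(ℏ - (α_j-α_i)/d)` times the value at `ℏ' = (α_j-α_i)/d`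
of the `q^{d*-d}`-coefficient of `𝒴_{-l}(α_j, ℏ', q)` is a Laurent polynomial in `ℏ`. -/
theorem stmt4 (n l : ℕ) (hn : 2 ≤ n) (a : Fin l → ℕ) (ha : ∀ k, 0 < a k)
    (i : Fin n) (dstar : ℕ) (hd : 1 ≤ dstar) :
    ∃ (p : Polynomial (Qa n)) (N : ℕ),
      (Ynl n l a (al n i) dstar
          - ∑ d ∈ Icc 1 dstar, ∑ j ∈ univ.erase i,
              RatFunc.C (frakC n l a i j d) /
                  (RatFunc.X - RatFunc.C ((al n j - al n i) / (d : Qa n))) *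
                RatFunc.C (RatFunc.eval (RingHom.id (Qa n))
                  ((al n j - al n i) / (d : Qa n)) (Ynl n l a (al n j) (dstar - d))))
        * RatFunc.X ^ N
      = algebraMap (Polynomial (Qa n)) (RatFunc (Qa n)) p :=
  stmt4_general n l a i dstar

end Stmt4
end
end

section
/- Define Φ(ℏ,z,q) = Σ_{i=1}^n (e^{α_i z}/∏_{k≠i}(α_i−α_k)) 𝒴(α_i, ℏ, q e^{ℏz}) 𝒴_{−l}(α_i, −ℏ, q), a formal power series in z and q whose coefficients are rational functions of ℏ. Then every coefficient of z^a q^b in Φ is a polynomial in ℏ with coefficients in ℚ_α; that is, Φ ∈ ℚ_α[ℏ][[z,q]]. (In other words, the pair (𝒴, 𝒴_{−l}) satisfies the mutual polynomiality condition.) -/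
/-!
Put `y = α_i + dℏ`. The numerator factors of `𝒴(α_i, ℏ)` at `q^d` and of `𝒴_{-l}(α_i, -ℏ)` at
`q^{b-d}` are consecutive pieces of the progressions `a_k y - rℏ`, `0 ≤ r < a_k b`, and their
denominator factors, together with `∏_{k≠i} (α_i - α_k)`, are the differences between `y` and the
other nodes `α_j + rℏ`, `0 ≤ r ≤ b`. With the exponential factor summing to `y^A/A!`, the
`z^A q^b` coefficient of `Φ` is thus the sum of the residues of `N(y)/D(y)`, where
`N(y) = (y^A/A!) ∏_k ∏_{r < a_k b} (a_k y - rℏ)` and `D(y) = ∏_{j, r ≤ b} (y - α_j - rℏ)`.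
By Lagrange interpolation this sum is the coefficient of `y^{deg D - 1}` in `N mod D`, which lies
in `ℚ_α[ℏ]` because `D` is monic over `ℚ_α[ℏ]`.
-/

open Finset

noncomputable section

namespace Stmt5

/-- `ℚ_α = ℚ(α_1,…,α_n)`, the field of rational functions in the indeterminates `α_i`. -/
abbrev Qa (n : ℕ) := FractionRing (MvPolynomial (Fin n) ℚ)

/-- The indeterminates `α_i` as elements of `ℚ_α`. -/
def al (n : ℕ) (i : Fin n) : Qa n := algebraMap (MvPolynomial (Fin n) ℚ) (Qa n) (MvPolynomial.X i)

/-- The `q^d`-coefficient of `𝒴(x, ℏ, q)` as a rational function of `ℏ` (the `RatFunc`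
variable) over `ℚ_α`. -/
def Ycal (n l : ℕ) (a : Fin l → ℕ) (x : Qa n) (d : ℕ) : RatFunc (Qa n) :=
  (∏ k, ∏ r ∈ range (a k * d),
      (RatFunc.C ((a k : Qa n) * x) + ((r : RatFunc (Qa n)) + 1) * RatFunc.X)) /
    ∏ r ∈ range d, ∏ k,
      (RatFunc.C (x - al n k) + ((r : RatFunc (Qa n)) + 1) * RatFunc.X)

/-- The `q^d`-coefficient of `𝒴_{-l}(x, -ℏ, q)`, i.e. of `𝒴_{-l}` with `ℏ` replaced
by `-ℏ`. -/
def YnlNeg (n l : ℕ) (a : Fin l → ℕ) (x : Qa n) (d : ℕ) : RatFunc (Qa n) :=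
  (∏ k, ∏ r ∈ range (a k * d),
      (RatFunc.C ((a k : Qa n) * x) + (r : RatFunc (Qa n)) * (-RatFunc.X))) /
    ∏ r ∈ range d, ∏ k,
      (RatFunc.C (x - al n k) + ((r : RatFunc (Qa n)) + 1) * (-RatFunc.X))

end Stmt5

open Polynomial

section Residues

variable {R K ι : Type*} [CommRing R] [Field K] [Algebra R K] [DecidableEq ι]

/-- The left side is the sum of the residues of `N / nodal s w` at its (simple) poles. -/
theorem sum_aeval_div_prod_sub_eq_algebraMap_coeff_modByMonic
    (hφ : Function.Injective (algebraMap R K)) (s : Finset ι) {w : ι → R} (hw : Set.InjOn w s)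
    (N : R[X]) :
    ∑ t ∈ s, aeval (algebraMap R K (w t)) N /
        ∏ t' ∈ s.erase t, (algebraMap R K (w t) - algebraMap R K (w t')) =
      algebraMap R K ((N %ₘ Lagrange.nodal s w).coeff (#s - 1)) := by
  have : Nontrivial R := (algebraMap R K).domain_nontrivial
  have hdeg : ((N %ₘ Lagrange.nodal s w).map (algebraMap R K)).degree < #s :=
    degree_map_le.trans_lt <| Lagrange.degree_nodal (v := w) ▸
      degree_modByMonic_lt _ Lagrange.nodal_monic
  rw [← coeff_map, Lagrange.coeff_eq_sum (hφ.comp_injOn hw) hdeg]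
  refine sum_congr rfl fun t ht => ?_
  rw [eval_map_algebraMap, Function.comp_apply, aeval_modByMonic_eq_self_of_root <| by
    rw [aeval_algebraMap_apply_eq_algebraMap_eval, Lagrange.eval_nodal_at_node ht, map_zero]]
  rfl

end Residues

theorem sum_antidiagonal_pow_div_factorial {K : Type*} [Field K] [CharZero K] (x y : K) (A : ℕ) :
    ∑ kk ∈ antidiagonal A, x ^ kk.1 / kk.1.factorial * (y ^ kk.2 / kk.2.factorial) =
      (x + y) ^ A / A.factorial := by
  rw [add_pow, sum_div, Nat.sum_antidiagonal_eq_sum_range_succ_mk]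
  refine sum_congr rfl fun k hk => ?_
  rw [Nat.cast_choose K (Nat.lt_succ_iff.mp (mem_range.mp hk))]
  field_simp
  rw [mul_div_mul_right _ _ (Nat.cast_ne_zero.2 A.factorial_ne_zero)]

section Products

variable {M : Type*} [CommMonoid M]

theorem prod_erase_eq_prod_update_one {α : Type*} [DecidableEq α] {s : Finset α} {a : α}
    (ha : a ∈ s) (f : α → M) : ∏ x ∈ s.erase a, f x = ∏ x ∈ s, Function.update f a 1 x := by
  rw [prod_update_of_mem ha, one_mul, sdiff_singleton_eq_erase]

theorem prod_range_succ_erase (f : ℕ → M) {d b : ℕ} (hd : d ≤ b) :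
    ∏ r ∈ (range (b + 1)).erase d, f r =
      (∏ r ∈ range d, f r) * ∏ r ∈ range (b - d), f (d + 1 + r) := by
  rw [prod_erase_eq_prod_update_one (mem_range.2 (by omega)),
    show b + 1 = d + 1 + (b - d) by omega, prod_range_add, prod_range_succ,
    Function.update_self, mul_one]
  congr 1 <;> refine prod_congr rfl fun r hr => Function.update_of_ne ?_ _ _
  · exact (mem_range.1 hr).ne
  · omega

theorem prod_product_erase {α β : Type*} [DecidableEq α] [DecidableEq β]
    {s : Finset α} {t : Finset β} {a : α} {b : β} (ha : a ∈ s) (hb : b ∈ t) (f : α × β → M) :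
    ∏ x ∈ (s ×ˢ t).erase (a, b), f x =
      (∏ y ∈ t.erase b, ∏ x ∈ s, f (x, y)) * ∏ x ∈ s.erase a, f (x, b) := by
  rw [prod_erase_eq_prod_update_one (mem_product.2 ⟨ha, hb⟩), prod_product_right,
    ← prod_erase_mul t _ hb, prod_erase_eq_prod_update_one ha]
  congr 1
  · refine prod_congr rfl fun y hy => prod_congr rfl fun x _ => Function.update_of_ne ?_ _ _
    simp [ne_of_mem_erase hy]
  · refine prod_congr rfl fun x _ => ?_
    by_cases hx : x = a <;> simp [hx]

end Products

section ArithmeticProgressions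

variable {K : Type*} [CommRing K]

theorem prod_range_natCast_sub {M : Type*} [CommMonoid M] (f : K → M) (m : ℕ) :
    ∏ r ∈ range m, f (m - r) = ∏ r ∈ range m, f (r + 1) := by
  rw [← prod_range_reflect]
  refine prod_congr rfl fun r hr => ?_
  have hr : r < m := mem_range.1 hr
  rw [Nat.cast_sub (by omega), Nat.cast_sub (by omega)]
  ring_nf

theorem prod_range_add_sub_mul (x h : K) (m₁ m₂ : ℕ) :
    ∏ r ∈ range (m₁ + m₂), (x + m₁ * h - r * h) =
      (∏ r ∈ range m₁, (x + (r + 1) * h)) * ∏ r ∈ range m₂, (x + r * -h) := by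
  rw [prod_range_add, ← prod_range_natCast_sub (fun u => x + u * h)]
  congr 1 <;> refine prod_congr rfl fun r _ => ?_
  · ring
  · push_cast; ring

theorem prod_product_range_erase_sub {ι : Type*} [Fintype ι] [DecidableEq ι] (c : ι → K) (h : K)
    (i : ι) {d b : ℕ} (hd : d ≤ b) :
    ∏ t ∈ (univ ×ˢ range (b + 1)).erase (i, d), (c i + d * h - (c t.1 + t.2 * h)) =
      (∏ r ∈ range d, ∏ k, (c i - c k + (r + 1) * h)) *
        (∏ r ∈ range (b - d), ∏ k, (c i - c k + (r + 1) * -h)) *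
          ∏ k ∈ univ.erase i, (c i - c k) := by
  rw [prod_product_erase (mem_univ i) (mem_range.2 (by omega)), prod_range_succ_erase _ hd,
    ← prod_range_natCast_sub (fun u => ∏ k, (c i - c k + u * h))]
  congr 1
  · congr 1 <;> refine prod_congr rfl fun r _ => prod_congr rfl fun k _ => ?_
    · ring
    · push_cast; ring
  · exact prod_congr rfl fun k _ => by ring

end ArithmeticProgressions

namespace Stmt5

def node (n : ℕ) (t : Fin n × ℕ) : (Qa n)[X] := C (al n t.1) + (t.2 : (Qa n)[X]) * X

theorem node_injective (n : ℕ) : Function.Injective (node n) := by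
  rintro ⟨i, r⟩ ⟨j, s⟩ h
  have h₀ := congrArg (coeff · 0) h
  have h₁ := congrArg (coeff · 1) h
  simp only [node, coeff_add, coeff_C_zero, coeff_C_succ, coeff_natCast_mul, coeff_X_zero,
    coeff_X_one, mul_zero, mul_one, add_zero, zero_add, Nat.cast_inj] at h₀ h₁
  have hij : i = j := MvPolynomial.X_injective (IsFractionRing.injective _ (Qa n) h₀)
  rw [hij, h₁]

theorem algebraMap_node (n : ℕ) (t : Fin n × ℕ) :
    algebraMap (Qa n)[X] (RatFunc (Qa n)) (node n t) =
      RatFunc.C (al n t.1) + (t.2 : RatFunc (Qa n)) * RatFunc.X := by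
  simp [node, RatFunc.algebraMap_C, RatFunc.algebraMap_X]

def numerator (n l : ℕ) (a : Fin l → ℕ) (A b : ℕ) : (Qa n)[X][X] :=
  C (C (A.factorial : Qa n)⁻¹) * X ^ A *
    ∏ k, ∏ r ∈ range (a k * b), ((a k : (Qa n)[X][X]) * X - C ((r : (Qa n)[X]) * X))

theorem aeval_numerator (n l : ℕ) (a : Fin l → ℕ) (A b : ℕ) (y : RatFunc (Qa n)) :
    aeval y (numerator n l a A b) =
      y ^ A / A.factorial *
        ∏ k, ∏ r ∈ range (a k * b), ((a k : RatFunc (Qa n)) * y - (r : RatFunc (Qa n)) * RatFunc.X) := by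
  simp [numerator, RatFunc.algebraMap_C, RatFunc.algebraMap_X, div_eq_inv_mul, mul_comm]

theorem summand_eq_residue (n l : ℕ) (a : Fin l → ℕ) (A : ℕ) {b d : ℕ} (hd : d ≤ b) (i : Fin n) :
    RatFunc.C (∏ k ∈ univ.erase i, (al n i - al n k))⁻¹ *
      ∑ kk ∈ antidiagonal A, RatFunc.C (al n i ^ kk.1 / (kk.1.factorial : Qa n)) *
        (((d : RatFunc (Qa n)) * RatFunc.X) ^ kk.2 / (kk.2.factorial : RatFunc (Qa n))) *
        Ycal n l a (al n i) d * YnlNeg n l a (al n i) (b - d) =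
    aeval (algebraMap (Qa n)[X] (RatFunc (Qa n)) (node n (i, d))) (numerator n l a A b) /
      ∏ t ∈ (univ ×ˢ range (b + 1)).erase (i, d),
        (algebraMap (Qa n)[X] (RatFunc (Qa n)) (node n (i, d)) -
          algebraMap (Qa n)[X] (RatFunc (Qa n)) (node n t)) := by
  have hexp : ∑ kk ∈ antidiagonal A, RatFunc.C (al n i ^ kk.1 / (kk.1.factorial : Qa n)) *
      (((d : RatFunc (Qa n)) * RatFunc.X) ^ kk.2 / (kk.2.factorial : RatFunc (Qa n))) =
      (RatFunc.C (al n i) + (d : RatFunc (Qa n)) * RatFunc.X) ^ A /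
        (A.factorial : RatFunc (Qa n)) := by
    simp only [map_div₀, map_pow, map_natCast, sum_antidiagonal_pow_div_factorial]
  have hnum : ∏ k, ∏ r ∈ range (a k * b),
      ((a k : RatFunc (Qa n)) * (RatFunc.C (al n i) + (d : RatFunc (Qa n)) * RatFunc.X) -
        (r : RatFunc (Qa n)) * RatFunc.X) =
      (∏ k, ∏ r ∈ range (a k * d),
        (RatFunc.C ((a k : Qa n) * al n i) + ((r : RatFunc (Qa n)) + 1) * RatFunc.X)) *
      ∏ k, ∏ r ∈ range (a k * (b - d)),
        (RatFunc.C ((a k : Qa n) * al n i) + (r : RatFunc (Qa n)) * -RatFunc.X) := by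
    rw [← prod_mul_distrib]
    refine prod_congr rfl fun k _ => ?_
    rw [← prod_range_add_sub_mul, ← Nat.mul_add, Nat.add_sub_cancel' hd]
    refine prod_congr rfl fun r _ => ?_
    rw [map_mul, map_natCast]
    push_cast
    ring
  have hden := prod_product_range_erase_sub (fun j => RatFunc.C (al n j)) RatFunc.X i hd
  simp only [← map_sub] at hden
  simp only [algebraMap_node, aeval_numerator, hden, hnum, ← sum_mul, hexp, Ycal,
    YnlNeg, map_inv₀, map_prod]
  field_simp

theorem stmt5_general (n l : ℕ) (a : Fin l → ℕ) :
    ∀ A b : ℕ, ∃ p : Polynomial (Qa n),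
      (∑ i : Fin n, RatFunc.C (∏ k ∈ univ.erase i, (al n i - al n k))⁻¹ *
        ∑ dd ∈ Finset.HasAntidiagonal.antidiagonal b, ∑ kk ∈ Finset.HasAntidiagonal.antidiagonal A,
          RatFunc.C (al n i ^ kk.1 / (kk.1.factorial : Qa n)) *
            (((dd.1 : RatFunc (Qa n)) * RatFunc.X) ^ kk.2 / (kk.2.factorial : RatFunc (Qa n))) *
            Ycal n l a (al n i) dd.1 * YnlNeg n l a (al n i) dd.2)
      = algebraMap (Polynomial (Qa n)) (RatFunc (Qa n)) p := by
  intro A b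
  let nodes := (univ : Finset (Fin n)) ×ˢ range (b + 1)
  refine ⟨(numerator n l a A b %ₘ Lagrange.nodal nodes (node n)).coeff (#nodes - 1), ?_⟩
  rw [← sum_aeval_div_prod_sub_eq_algebraMap_coeff_modByMonic (RatFunc.algebraMap_injective _)
    nodes (node_injective n).injOn, sum_product]
  refine sum_congr rfl fun i _ => ?_
  rw [Nat.sum_antidiagonal_eq_sum_range_succ_mk, mul_sum]
  exact sum_congr rfl fun d hd =>
    summand_eq_residue n l a A (Nat.lt_succ_iff.mp (mem_range.mp hd)) i

/-- the pair `(𝒴, 𝒴_{-l})` satisfies the mutual polynomiality condition: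
every coefficient of `z^A q^b` in
`Φ(ℏ,z,q) = Σ_i (e^{α_i z}/∏_{k≠i}(α_i-α_k)) 𝒴(α_i,ℏ,q e^{ℏz}) 𝒴_{-l}(α_i,-ℏ,q)`
is a polynomial in `ℏ` with coefficients in `ℚ_α`. -/
theorem stmt5 (n l : ℕ) (hn : 2 ≤ n) (a : Fin l → ℕ) (ha : ∀ k, 0 < a k) :
    ∀ A b : ℕ, ∃ p : Polynomial (Qa n),
      (∑ i : Fin n, RatFunc.C (∏ k ∈ univ.erase i, (al n i - al n k))⁻¹ *
        ∑ dd ∈ Finset.HasAntidiagonal.antidiagonal b, ∑ kk ∈ Finset.HasAntidiagonal.antidiagonal A,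
          RatFunc.C (al n i ^ kk.1 / (kk.1.factorial : Qa n)) *
            (((dd.1 : RatFunc (Qa n)) * RatFunc.X) ^ kk.2 / (kk.2.factorial : RatFunc (Qa n))) *
            Ycal n l a (al n i) dd.1 * YnlNeg n l a (al n i) dd.2)
      = algebraMap (Polynomial (Qa n)) (RatFunc (Qa n)) p :=
  stmt5_general n l a

end Stmt5
end
end
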